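/- Let G be a simple graph on a vertex set V satisfying the extension property, and let M be the doubled graph of G on V × Bool. Suppose u₁, …, uₙ are distinct vertices in V × {0}, v₁, …, vₙ are distinct vertices in V × {0}, and the map sending uᵢ ↦ vᵢ and uᵢ' ↦ vᵢ' for i = 1, …, n is an isomorphism between the induced subgraphs of M on {u₁, …, uₙ, u₁', …, uₙ'} and on {v₁, …, vₙ, v₁', …, vₙ'}. Then for every u_{n+1} ∈ V × {0} with u_{n+1} ∉ {u₁, …, uₙ} there exists v_{n+1} ∈ V × {0} with v_{n+1} ∉ {v₁, …, vₙ} such that the extended map additionally sending u_{n+1} ↦ v_{n+1} and u_{n+1}' ↦ v_{n+1}' is again an isomorphism of induced subgraphs of M. -/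

import Mathlib

/-- The doubled graph of a simple graph `G` on `V`: its vertex set is `V × Bool`, and
`(a, i)` is adjacent to `(b, j)` iff either `i = j` and `a` is adjacent to `b` in `G`,
or `i ≠ j` and `a` is not adjacent to `b` in `G`. -/
def doubled {V : Type*} (G : SimpleGraph V) : SimpleGraph (V × Bool) where
  Adj u v := (u.2 = v.2 ∧ G.Adj u.1 v.1) ∨ (u.2 ≠ v.2 ∧ ¬ G.Adj u.1 v.1)
  symm := by
    constructor
    intro u v h
    rcases h with ⟨h1, h2⟩ | ⟨h1, h2⟩
    · exact Or.inl ⟨h1.symm, h2.symm⟩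
    · exact Or.inr ⟨h1.symm, fun h => h2 h.symm⟩
  loopless := by
    constructor
    intro u h
    rcases h with ⟨_, h2⟩ | ⟨h1, _⟩
    · exact G.ne_of_adj h2 rfl
    · exact h1 rfl

/-- For a vertex `u = (a, i)` of the doubled graph, `prime u` is the vertex `(a, ¬i)`. -/
def prime {V : Type*} (u : V × Bool) : V × Bool := (u.1, !u.2)

/-- A simple graph `G` on `V` has the extension property if for all finite disjoint sets
`A, B ⊆ V` there is a vertex `c ∉ A ∪ B` adjacent to every vertex of `A` and to no vertex
of `B`. -/
def ExtensionProperty {V : Type*} (G : SimpleGraph V) : Prop :=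
  ∀ A B : Finset V, Disjoint A B →
    ∃ c, c ∉ A ∧ c ∉ B ∧ (∀ a ∈ A, G.Adj c a) ∧ ∀ b ∈ B, ¬ G.Adj c b

/-!
Adjacency in the doubled graph between `(x, ε)` and `(y, δ)` is `G.Adj x y` read through the
parity `ε = δ`, so the map `(u i, ε) ↦ (v i, ε)` is an isomorphism of induced subgraphs of the
doubled graph exactly when `u i ↦ v i` is one for `G`. The extension property then supplies a
new vertex `vn` adjacent to precisely those `v i` for which `u i` is adjacent to `un`.
-/

lemma doubled_adj {V : Type*} (G : SimpleGraph V) (x y : V) (ε δ : Bool) :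
    (doubled G).Adj (x, ε) (y, δ) ↔ (G.Adj x y ↔ ε = δ) := by
  simp only [doubled]
  tauto

namespace ExtensionProperty

variable {V : Type*} {G : SimpleGraph V}

lemma exists_forall_adj_iff (hG : ExtensionProperty G) (s : Finset V) (p : V → Prop) :
    ∃ c ∉ s, ∀ x ∈ s, G.Adj c x ↔ p x := by
  classical
  obtain ⟨c, hcA, hcB, hA, hB⟩ :=
    hG (s.filter p) (s.filter fun x => ¬ p x) (Finset.disjoint_filter_filter_not s s p)
  refine ⟨c, fun hc => ?_, fun x hx => ?_⟩
  · by_cases hp : p c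
    · exact hcA (Finset.mem_filter.2 ⟨hc, hp⟩)
    · exact hcB (Finset.mem_filter.2 ⟨hc, hp⟩)
  · by_cases hp : p x
    · exact iff_of_true (hA x (Finset.mem_filter.2 ⟨hx, hp⟩)) hp
    · exact iff_of_false (hB x (Finset.mem_filter.2 ⟨hx, hp⟩)) hp

lemma exists_forall_adj_iff_of_injective (hG : ExtensionProperty G) {ι : Type*} [Fintype ι]
    {v : ι → V} (hv : Function.Injective v) (p : ι → Prop) :
    ∃ c ∉ Set.range v, ∀ i, G.Adj c (v i) ↔ p i := by
  classical
  obtain ⟨c, hc, hadj⟩ :=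
    hG.exists_forall_adj_iff (Finset.univ.image v) (fun x => ∀ i, v i = x → p i)
  refine ⟨c, fun ⟨i, hi⟩ => hc (hi ▸ Finset.mem_image_of_mem v (Finset.mem_univ i)), fun i => ?_⟩
  rw [hadj (v i) (Finset.mem_image_of_mem v (Finset.mem_univ i))]
  exact ⟨fun h => h i rfl, fun h j hj => hv hj ▸ h⟩

end ExtensionProperty

lemma SimpleGraph.adj_snoc_iff {V : Type*} (G : SimpleGraph V) {n : ℕ} {u v : Fin n → V}
    (hiso : ∀ i j, G.Adj (u i) (u j) ↔ G.Adj (v i) (v j)) {un vn : V}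
    (hnew : ∀ i, G.Adj un (u i) ↔ G.Adj vn (v i)) (i j : Fin (n + 1)) :
    G.Adj ((Fin.snoc u un : Fin (n + 1) → V) i) ((Fin.snoc u un : Fin (n + 1) → V) j) ↔
      G.Adj ((Fin.snoc v vn : Fin (n + 1) → V) i) ((Fin.snoc v vn : Fin (n + 1) → V) j) := by
  induction i using Fin.lastCases with
  | last =>
    induction j using Fin.lastCases with
    | last => simp
    | cast j => simpa using hnew j
  | cast i =>
    induction j using Fin.lastCases with
    | last => simpa [G.adj_comm _ un, G.adj_comm _ vn] using hnew i
    | cast j => simpa using hiso i j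

theorem statement8_general {V : Type*} (G : SimpleGraph V) (hG : ExtensionProperty G)
    (n : ℕ) (u v : Fin n → V) (hv : Function.Injective v)
    (hiso : ∀ (i j : Fin n) (ε δ : Bool),
      (doubled G).Adj (u i, ε) (u j, δ) ↔ (doubled G).Adj (v i, ε) (v j, δ))
    (un : V) :
    ∃ vn : V, vn ∉ Set.range v ∧
      ∀ (i j : Fin (n + 1)) (ε δ : Bool),
        (doubled G).Adj ((Fin.snoc u un : Fin (n + 1) → V) i, ε) ((Fin.snoc u un : Fin (n + 1) → V) j, δ) ↔
          (doubled G).Adj ((Fin.snoc v vn : Fin (n + 1) → V) i, ε) ((Fin.snoc v vn : Fin (n + 1) → V) j, δ) := by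
  have hisoG : ∀ i j, G.Adj (u i) (u j) ↔ G.Adj (v i) (v j) := fun i j => by
    simpa only [doubled_adj, iff_true] using hiso i j true true
  obtain ⟨vn, hvn, hnew⟩ := hG.exists_forall_adj_iff_of_injective hv fun i => G.Adj un (u i)
  refine ⟨vn, hvn, fun i j ε δ => ?_⟩
  rw [doubled_adj, doubled_adj, G.adj_snoc_iff hisoG (fun i => (hnew i).symm) i j]

/-- Back-and-forth step: let `G` have the extension property and let `M` be the doubled graph.
If `u 0, …, u (n-1)` and `v 0, …, v (n-1)` are distinct vertices (listed by their first
coordinates, all in `V × {0}`) such that the map `(u i, ε) ↦ (v i, ε)` is an isomorphism of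
the corresponding induced subgraphs of `M`, then for every new vertex `un ∉ range u` there is
`vn ∉ range v` such that the extended map, additionally sending `(un, ε) ↦ (vn, ε)`, is again
an isomorphism of induced subgraphs of `M`. -/
theorem statement8 {V : Type*} (G : SimpleGraph V) (hG : ExtensionProperty G)
    (n : ℕ) (u v : Fin n → V) (hu : Function.Injective u) (hv : Function.Injective v)
    (hiso : ∀ (i j : Fin n) (ε δ : Bool),
      (doubled G).Adj (u i, ε) (u j, δ) ↔ (doubled G).Adj (v i, ε) (v j, δ))
    (un : V) (hun : un ∉ Set.range u) :
    ∃ vn : V, vn ∉ Set.range v ∧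
      ∀ (i j : Fin (n + 1)) (ε δ : Bool),
        (doubled G).Adj ((Fin.snoc u un : Fin (n + 1) → V) i, ε) ((Fin.snoc u un : Fin (n + 1) → V) j, δ) ↔
          (doubled G).Adj ((Fin.snoc v vn : Fin (n + 1) → V) i, ε) ((Fin.snoc v vn : Fin (n + 1) → V) j, δ) :=
  statement8_general G hG n u v hv hiso un
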